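/- Let U be a positive integer, let A = D + E with D an invertible U×U complex diagonal matrix and E a U×U complex matrix satisfying ‖D⁻¹E‖_F < 1, let K ≥ 0 be an integer, and let Δ_K = A⁻¹ − Σ_{n=0}^{K−1}(−D⁻¹E)ⁿD⁻¹. Then for every vector y ∈ ℂ^U, ‖Δ_K y‖₂ ≤ ‖D⁻¹E‖_F^K · ‖A⁻¹ y‖₂. In particular, the residual estimation error ‖Δ_K y‖₂ tends to zero exponentially fast as K → ∞. -/

import Mathlib

open Matrix Filter

/-- Frobenius norm of a complex matrix. -/
noncomputable def frobNorm {m n : Type*} [Fintype m] [Fintype n] (M : Matrix m n ℂ) : ℝ :=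
  Real.sqrt (∑ i, ∑ j, ‖M i j‖ ^ 2)

/-- Euclidean (ℓ₂) norm of a complex vector. -/
noncomputable def l2Norm {n : Type*} [Fintype n] (v : n → ℂ) : ℝ :=
  Real.sqrt (∑ i, ‖v i‖ ^ 2)

/-! Writing `B = -D⁻¹E`, we have `A = D (1 - B)`, so `D⁻¹ = (1 - B) A⁻¹` and the partial Neumann
sum telescopes: `A⁻¹ - ∑_{n<K} Bⁿ D⁻¹ = A⁻¹ - (1 - Bᴷ) A⁻¹ = Bᴷ A⁻¹`. The Frobenius norm is
submultiplicative and bounds the `ℓ₂` operator norm, so `‖Bᴷ A⁻¹ y‖₂ ≤ ‖B‖_Fᴷ ‖A⁻¹ y‖₂`; the same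
submultiplicativity makes `1 - B` invertible when `‖B‖_F < 1`. -/

theorem sub_geom_sum_mul_eq_pow_mul {R : Type*} [Ring R] {B X Y : R} (hY : Y = (1 - B) * X)
    (K : ℕ) : X - ∑ n ∈ Finset.range K, B ^ n * Y = B ^ K * X := by
  simp_rw [hY, ← mul_assoc, ← Finset.sum_mul, geom_sum_mul_neg, sub_mul, one_mul, sub_sub_cancel]

section Frobenius

attribute [local instance] Matrix.frobeniusSeminormedAddCommGroup
  Matrix.frobeniusNormedAddCommGroup Matrix.frobeniusNormedRing Matrix.frobeniusNormedSpace

variable {m n : Type*} [Fintype m] [Fintype n]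

theorem frobNorm_eq_norm (M : Matrix m n ℂ) : frobNorm M = ‖M‖ := by
  rw [Matrix.frobenius_norm_def, frobNorm, Real.sqrt_eq_rpow]
  simp_rw [← Real.rpow_natCast]
  norm_num

theorem frobNorm_nonneg (M : Matrix m n ℂ) : 0 ≤ frobNorm M := Real.sqrt_nonneg _

theorem l2Norm_nonneg (v : n → ℂ) : 0 ≤ l2Norm v := Real.sqrt_nonneg _

theorem frobNorm_neg (M : Matrix m n ℂ) : frobNorm (-M) = frobNorm M := by
  simp only [frobNorm_eq_norm, norm_neg]

theorem l2Norm_eq_frobNorm_replicateCol (v : n → ℂ) :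
    l2Norm v = frobNorm (replicateCol Unit v) := by
  simp [l2Norm, frobNorm, replicateCol_apply]

theorem l2Norm_mulVec_le (M : Matrix m n ℂ) (v : n → ℂ) :
    l2Norm (M *ᵥ v) ≤ frobNorm M * l2Norm v := by
  simp only [l2Norm_eq_frobNorm_replicateCol, replicateCol_mulVec, frobNorm_eq_norm]
  exact frobenius_norm_mul M (replicateCol Unit v)

theorem l2Norm_pow_mulVec_le [DecidableEq n] (B : Matrix n n ℂ) (K : ℕ) (v : n → ℂ) :
    l2Norm ((B ^ K) *ᵥ v) ≤ frobNorm B ^ K * l2Norm v := by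
  induction K with
  | zero => simp
  | succ K ih =>
    calc l2Norm ((B ^ (K + 1)) *ᵥ v) = l2Norm (B *ᵥ (B ^ K) *ᵥ v) := by
          rw [pow_succ', mulVec_mulVec]
      _ ≤ frobNorm B * l2Norm ((B ^ K) *ᵥ v) := l2Norm_mulVec_le _ _
      _ ≤ frobNorm B * (frobNorm B ^ K * l2Norm v) :=
          mul_le_mul_of_nonneg_left ih (frobNorm_nonneg B)
      _ = frobNorm B ^ (K + 1) * l2Norm v := by ring

theorem isUnit_one_sub_of_frobNorm_lt_one [DecidableEq n] {B : Matrix n n ℂ}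
    (h : frobNorm B < 1) : IsUnit (1 - B) :=
  haveI : CompleteSpace (Matrix n n ℂ) := FiniteDimensional.complete ℂ _
  isUnit_one_sub_of_norm_lt_one (by rwa [← frobNorm_eq_norm])

end Frobenius

section NeumannSeries

variable {n : Type*} [Fintype n] [DecidableEq n] {D E : Matrix n n ℂ}

theorem add_eq_mul_one_sub_neg_inv_mul (hD : IsUnit D) : D + E = D * (1 - -(D⁻¹ * E)) := by
  rw [sub_neg_eq_add, mul_add, mul_one, ← Matrix.mul_assoc,
    mul_nonsing_inv _ ((isUnit_iff_isUnit_det D).mp hD), Matrix.one_mul]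

theorem isUnit_add_of_frobNorm_inv_mul_lt_one (hD : IsUnit D) (h : frobNorm (D⁻¹ * E) < 1) :
    IsUnit (D + E) := by
  rw [add_eq_mul_one_sub_neg_inv_mul hD]
  exact hD.mul (isUnit_one_sub_of_frobNorm_lt_one (by rwa [frobNorm_neg]))

theorem inv_add_sub_neumann_sum (hD : IsUnit D) (h : frobNorm (D⁻¹ * E) < 1) (K : ℕ) :
    (D + E)⁻¹ - ∑ k ∈ Finset.range K, (-(D⁻¹ * E)) ^ k * D⁻¹ =
      (-(D⁻¹ * E)) ^ K * (D + E)⁻¹ := by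
  have hA := (isUnit_iff_isUnit_det _).mp (isUnit_add_of_frobNorm_inv_mul_lt_one hD h)
  refine sub_geom_sum_mul_eq_pow_mul ?_ K
  rw [sub_neg_eq_add, ← nonsing_inv_mul D ((isUnit_iff_isUnit_det D).mp hD), ← Matrix.mul_add,
    Matrix.mul_assoc, mul_nonsing_inv _ hA, Matrix.mul_one]

theorem l2Norm_inv_add_sub_neumann_sum_mulVec_le (hD : IsUnit D) (h : frobNorm (D⁻¹ * E) < 1)
    (K : ℕ) (y : n → ℂ) :
    l2Norm (((D + E)⁻¹ - ∑ k ∈ Finset.range K, (-(D⁻¹ * E)) ^ k * D⁻¹) *ᵥ y) ≤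
      frobNorm (D⁻¹ * E) ^ K * l2Norm ((D + E)⁻¹ *ᵥ y) := by
  rw [inv_add_sub_neumann_sum hD h K, ← mulVec_mulVec, ← frobNorm_neg]
  exact l2Norm_pow_mulVec_le _ K _

end NeumannSeries

theorem residual_estimation_error_bound_general {U : ℕ}
    (d : Fin U → ℂ) (hd : ∀ i, d i ≠ 0) (E : Matrix (Fin U) (Fin U) ℂ)
    (h : frobNorm ((Matrix.diagonal d)⁻¹ * E) < 1) :
    (∀ (K : ℕ) (y : Fin U → ℂ),
        l2Norm
          (((Matrix.diagonal d + E)⁻¹ -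
              ∑ n ∈ Finset.range K,
                (-((Matrix.diagonal d)⁻¹ * E)) ^ n * (Matrix.diagonal d)⁻¹).mulVec y) ≤
          frobNorm ((Matrix.diagonal d)⁻¹ * E) ^ K *
            l2Norm ((Matrix.diagonal d + E)⁻¹.mulVec y)) ∧
    ∀ y : Fin U → ℂ,
      Tendsto
        (fun K : ℕ =>
          l2Norm
            (((Matrix.diagonal d + E)⁻¹ -
                ∑ n ∈ Finset.range K,
                  (-((Matrix.diagonal d)⁻¹ * E)) ^ n * (Matrix.diagonal d)⁻¹).mulVec y))
        atTop (nhds 0) := by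
  have hD : IsUnit (diagonal d) := isUnit_diagonal.mpr (Pi.isUnit_iff.mpr fun i => (hd i).isUnit)
  have hbound := l2Norm_inv_add_sub_neumann_sum_mulVec_le hD h
  refine ⟨hbound, fun y => squeeze_zero (fun K => l2Norm_nonneg _) (hbound · y) ?_⟩
  simpa only [zero_mul] using
    (tendsto_pow_atTop_nhds_zero_of_lt_one (frobNorm_nonneg _) h).mul_const
    (l2Norm ((diagonal d + E)⁻¹ *ᵥ y))

/-- Let `A = D + E` with `D = diagonal d` invertible and `‖D⁻¹E‖_F < 1`,
and let `Δ_K = A⁻¹ - Σ_{n=0}^{K-1} (-D⁻¹E)ⁿ D⁻¹`. Then for every `y ∈ ℂ^U`,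
`‖Δ_K y‖₂ ≤ ‖D⁻¹E‖_F^K ‖A⁻¹ y‖₂`; in particular `‖Δ_K y‖₂ → 0` as `K → ∞`. -/
theorem residual_estimation_error_bound {U : ℕ} (hU : 0 < U)
    (d : Fin U → ℂ) (hd : ∀ i, d i ≠ 0) (E : Matrix (Fin U) (Fin U) ℂ)
    (h : frobNorm ((Matrix.diagonal d)⁻¹ * E) < 1) :
    (∀ (K : ℕ) (y : Fin U → ℂ),
        l2Norm
          (((Matrix.diagonal d + E)⁻¹ -
              ∑ n ∈ Finset.range K,
                (-((Matrix.diagonal d)⁻¹ * E)) ^ n * (Matrix.diagonal d)⁻¹).mulVec y) ≤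
          frobNorm ((Matrix.diagonal d)⁻¹ * E) ^ K *
            l2Norm ((Matrix.diagonal d + E)⁻¹.mulVec y)) ∧
    ∀ y : Fin U → ℂ,
      Tendsto
        (fun K : ℕ =>
          l2Norm
            (((Matrix.diagonal d + E)⁻¹ -
                ∑ n ∈ Finset.range K,
                  (-((Matrix.diagonal d)⁻¹ * E)) ^ n * (Matrix.diagonal d)⁻¹).mulVec y))
        atTop (nhds 0) :=
  residual_estimation_error_bound_general d hd E h
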